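/- arXiv:1612.08581 — 3 statements merged into one kernel-verified Lean document; each statement's English description precedes it below -/
import Mathlib

section
/- For every 1 ≤ q ≤ Q, one has (Z − Z'_q)_− ≤ 8Kt · 1_{R_q}, where (a)_− denotes the negative part of a. -/
open scoped ENNReal

noncomputable section

/-- `ℤ^d`. -/
abbrev Zd (d : ℕ) := Fin d → ℤ

/-- The `ℓ¹`-norm on `ℤ^d`. -/
def norm1 {d : ℕ} (x : Zd d) : ℝ := ∑ i, |(x i : ℝ)|

/-- The `ℓ^∞`-norm on `ℤ^d`. -/
def normInf {d : ℕ} (x : Zd d) : ℝ := ((Finset.univ.sup fun i => (x i).natAbs : ℕ) : ℝ)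

/-- Given a frozen environment (`ωe z` = number of frogs initially at `z`,
`Se z ℓ k` = position at time `k` of the `ℓ`-th frog started at `z`), the passage time
`τ(x,y)`: the first time at which one of the frogs initially at `x` hits `y`
(`∞` if there is no such time, in particular if `ωe x = 0`). -/
def tauE {d : ℕ} (ωe : Zd d → ℕ) (Se : Zd d → ℕ → ℕ → Zd d) (x y : Zd d) : ℝ≥0∞ :=
  sInf {r : ℝ≥0∞ | ∃ k : ℕ, (∃ ℓ : ℕ, 1 ≤ ℓ ∧ ℓ ≤ ωe x ∧ Se x ℓ k = y) ∧ r = k}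

open Classical in
/-- The truncated two-point function `σ_t(x,y)` (with cut-off constant `K`):
`σ_t(x,y) = 4Kt` if `‖x−y‖_∞ ≤ t` and `τ(x,y) > 4Kt`; `σ_t(x,y) = 4K‖x−y‖_∞` if
`‖x−y‖_∞ > t`; and `σ_t(x,y) = τ(x,y)` otherwise. -/
def sigmaE {d : ℕ} (K : ℕ) (t : ℝ) (ωe : Zd d → ℕ) (Se : Zd d → ℕ → ℕ → Zd d)
    (x y : Zd d) : ℝ≥0∞ :=
  if normInf (x - y) ≤ t then min (tauE ωe Se x y) (ENNReal.ofReal (4 * K * t))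
  else ENNReal.ofReal (4 * K * normInf (x - y))

/-- The truncated first passage time `T_t(x,y)` associated with `σ_t`, for a frozen
environment. -/
def TtE {d : ℕ} (K : ℕ) (t : ℝ) (ωe : Zd d → ℕ) (Se : Zd d → ℕ → ℕ → Zd d)
    (x y : Zd d) : ℝ≥0∞ :=
  sInf {r : ℝ≥0∞ | ∃ m : ℕ, 1 ≤ m ∧ ∃ c : ℕ → Zd d, c 0 = x ∧ c m = y ∧
    r = ∑ i ∈ Finset.range m, sigmaE K t ωe Se (c i) (c (i + 1))}

/-- The box of the tiling of `ℤ^d` by copies of `(−t/2, t/2]^d` centered at `c ∈ ℤ^d`. -/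
def tBox {d : ℕ} (t : ℝ) (c : Zd d) : Set (Zd d) :=
  {z | ∀ i, (c i : ℝ) - t / 2 < z i ∧ (z i : ℝ) ≤ c i + t / 2}


/-!
Resampling the environment on a box `Λ` of `ℓ^∞`-diameter at most `t` changes `σ_t(u, w)` only
for `u ∈ Λ`, so a path avoiding `Λ` keeps its cost. If the optimal path `π` meets `Λ`, let `a` and
`b` be its first and last visits and cut out the stretch between them. The new step from `π a` to
`π b` is short, so it costs at most `4Kt`; the step leaving `π b` is the only remaining one that
starts in `Λ`, and resampling raises its cost by at most `4Kt`, because `σ_t(u, w)` depends on the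
environment only when `‖u − w‖_∞ ≤ t`, where it lies in `[0, 4Kt]`.
-/

open Finset

variable {d : ℕ}

lemma normInf_sub_le_of_mem_tBox {t : ℝ} (ht : 0 ≤ t) {c u v : Zd d}
    (hu : u ∈ tBox t c) (hv : v ∈ tBox t c) : normInf (u - v) ≤ t := by
  unfold normInf
  rw [← Nat.le_floor_iff ht, Finset.sup_le_iff]
  intro i _
  obtain ⟨hu₁, hu₂⟩ := hu i
  obtain ⟨hv₁, hv₂⟩ := hv i
  rw [Nat.le_floor_iff ht, Nat.cast_natAbs, Int.cast_abs, Pi.sub_apply, Int.cast_sub, abs_le]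
  constructor <;> linarith

section Sigma

variable {K : ℕ} {t : ℝ} {ω ω' : Zd d → ℕ} {S S' : Zd d → ℕ → ℕ → Zd d}

lemma sigmaE_congr {x : Zd d} (hω : ω' x = ω x) (hS : S' x = S x) (y : Zd d) :
    sigmaE K t ω' S' x y = sigmaE K t ω S x y := by
  unfold sigmaE tauE
  rw [hω, hS]

lemma sigmaE_le_of_normInf_le {x y : Zd d} (h : normInf (x - y) ≤ t) :
    sigmaE K t ω S x y ≤ ENNReal.ofReal (4 * K * t) := by
  rw [sigmaE, if_pos h]
  exact min_le_right _ _

lemma sigmaE_le_ofReal_add_sigmaE (x y : Zd d) :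
    sigmaE K t ω' S' x y ≤ ENNReal.ofReal (4 * K * t) + sigmaE K t ω S x y := by
  by_cases h : normInf (x - y) ≤ t
  · exact (sigmaE_le_of_normInf_le h).trans le_self_add
  · rw [sigmaE, sigmaE, if_neg h, if_neg h]
    exact le_add_self

lemma TtE_le_sum {x y : Zd d} {n : ℕ} (hn : 1 ≤ n) {c : ℕ → Zd d} (hc0 : c 0 = x)
    (hcn : c n = y) :
    TtE K t ω S x y ≤ ∑ i ∈ range n, sigmaE K t ω S (c i) (c (i + 1)) :=
  sInf_le ⟨n, hn, c, hc0, hcn, rfl⟩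

end Sigma

section Shortcut

variable {α : Type*} (π : ℕ → α) (a b : ℕ)

def shortcut (i : ℕ) : α :=
  if i ≤ a then π i else π (i - (a + 1) + b)

lemma shortcut_zero : shortcut π a b 0 = π 0 :=
  if_pos (Nat.zero_le a)

lemma shortcut_add_sub {m : ℕ} (hbm : b ≤ m) : shortcut π a b (a + 1 + (m - b)) = π m := by
  rw [shortcut, if_neg (by omega)]
  congr 1
  omega

lemma sum_range_shortcut {M : Type*} [AddCommMonoid M] (f : α → α → M) (m : ℕ) :
    ∑ i ∈ range (a + 1 + (m - b)), f (shortcut π a b i) (shortcut π a b (i + 1)) =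
      ∑ i ∈ range a, f (π i) (π (i + 1)) + f (π a) (π b) +
        ∑ i ∈ Ico b m, f (π i) (π (i + 1)) := by
  rw [sum_range_add, sum_range_succ, sum_Ico_eq_sum_range]
  congr 2
  · refine sum_congr rfl fun i hi => ?_
    have hia := mem_range.1 hi
    rw [shortcut, shortcut, if_pos hia.le, if_pos (show i + 1 ≤ a from hia)]
  · simp [shortcut]
  · funext k
    rw [shortcut, shortcut, if_neg (by omega), if_neg (by omega)]
    congr 2 <;> omega

end Shortcut

section Resample

variable {K : ℕ} {t : ℝ} {ω ω' : Zd d → ℕ} {S S' : Zd d → ℕ → ℕ → Zd d} {Λ : Set (Zd d)}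

lemma sum_sigmaE_eq_of_forall_notMem (hω : ∀ z ∉ Λ, ω' z = ω z) (hS : ∀ z ∉ Λ, S' z = S z)
    {π : ℕ → Zd d} {s : Finset ℕ} (hπ : ∀ i ∈ s, π i ∉ Λ) :
    ∑ i ∈ s, sigmaE K t ω' S' (π i) (π (i + 1)) = ∑ i ∈ s, sigmaE K t ω S (π i) (π (i + 1)) :=
  sum_congr rfl fun i hi => sigmaE_congr (hω _ (hπ i hi)) (hS _ (hπ i hi)) _

lemma sum_Ico_sigmaE_le_ofReal_add (hω : ∀ z ∉ Λ, ω' z = ω z) (hS : ∀ z ∉ Λ, S' z = S z)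
    {π : ℕ → Zd d} {b m : ℕ} (hπ : ∀ i ∈ Ico (b + 1) m, π i ∉ Λ) :
    ∑ i ∈ Ico b m, sigmaE K t ω' S' (π i) (π (i + 1)) ≤
      ENNReal.ofReal (4 * K * t) + ∑ i ∈ Ico b m, sigmaE K t ω S (π i) (π (i + 1)) := by
  rcases lt_or_ge b m with hbm | hmb
  · rw [sum_eq_sum_Ico_succ_bot hbm, sum_eq_sum_Ico_succ_bot hbm, ← add_assoc,
      sum_sigmaE_eq_of_forall_notMem hω hS hπ]
    gcongr
    exact sigmaE_le_ofReal_add_sigmaE _ _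
  · simp [Ico_eq_empty_of_le hmb]

lemma TtE_le_sum_of_forall_notMem (hω : ∀ z ∉ Λ, ω' z = ω z) (hS : ∀ z ∉ Λ, S' z = S z)
    {π : ℕ → Zd d} {m : ℕ} (hm : 1 ≤ m) (hπ : ∀ i ∈ range m, π i ∉ Λ) :
    TtE K t ω' S' (π 0) (π m) ≤ ∑ i ∈ range m, sigmaE K t ω S (π i) (π (i + 1)) :=
  (TtE_le_sum hm rfl rfl).trans_eq (sum_sigmaE_eq_of_forall_notMem hω hS hπ)

lemma TtE_le_ofReal_add_sum_of_shortcut (ht : 0 ≤ t)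
    (hω : ∀ z ∉ Λ, ω' z = ω z) (hS : ∀ z ∉ Λ, S' z = S z)
    {π : ℕ → Zd d} {a b m : ℕ} (hab : a ≤ b) (hbm : b ≤ m) (hclose : normInf (π a - π b) ≤ t)
    (hbefore : ∀ i ∈ range a, π i ∉ Λ) (hafter : ∀ i ∈ Ico (b + 1) m, π i ∉ Λ) :
    TtE K t ω' S' (π 0) (π m) ≤
      ENNReal.ofReal (8 * K * t) + ∑ i ∈ range m, sigmaE K t ω S (π i) (π (i + 1)) := by
  set σ := sigmaE K t ω S
  set σ' := sigmaE K t ω' S'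
  have h8 : ENNReal.ofReal (8 * K * t) =
      ENNReal.ofReal (4 * K * t) + ENNReal.ofReal (4 * K * t) := by
    rw [← ENNReal.ofReal_add (by positivity) (by positivity)]
    ring_nf
  calc TtE K t ω' S' (π 0) (π m)
      ≤ ∑ i ∈ range (a + 1 + (m - b)), σ' (shortcut π a b i) (shortcut π a b (i + 1)) :=
        TtE_le_sum (by omega) (shortcut_zero π a b) (shortcut_add_sub π a b hbm)
    _ = ∑ i ∈ range a, σ' (π i) (π (i + 1)) + σ' (π a) (π b) +
          ∑ i ∈ Ico b m, σ' (π i) (π (i + 1)) := sum_range_shortcut π a b σ' m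
    _ ≤ ∑ i ∈ range a, σ (π i) (π (i + 1)) + ENNReal.ofReal (4 * K * t) +
          (ENNReal.ofReal (4 * K * t) + ∑ i ∈ Ico b m, σ (π i) (π (i + 1))) := by
        rw [sum_sigmaE_eq_of_forall_notMem hω hS hbefore]
        gcongr
        · exact sigmaE_le_of_normInf_le hclose
        · exact sum_Ico_sigmaE_le_ofReal_add hω hS hafter
    _ = ENNReal.ofReal (8 * K * t) +
          (∑ i ∈ range a, σ (π i) (π (i + 1)) + ∑ i ∈ Ico b m, σ (π i) (π (i + 1))) := by
        rw [h8]
        ring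
    _ ≤ ENNReal.ofReal (8 * K * t) + ∑ i ∈ range m, σ (π i) (π (i + 1)) := by
        rw [← sum_range_add_sum_Ico _ hbm]
        gcongr

lemma TtE_le_ofReal_add_sum_of_mem (ht : 0 ≤ t)
    (hΛ : ∀ u ∈ Λ, ∀ v ∈ Λ, normInf (u - v) ≤ t)
    (hω : ∀ z ∉ Λ, ω' z = ω z) (hS : ∀ z ∉ Λ, S' z = S z)
    {π : ℕ → Zd d} {m : ℕ} (hπ : ∃ i ≤ m, π i ∈ Λ) :
    TtE K t ω' S' (π 0) (π m) ≤
      ENNReal.ofReal (8 * K * t) + ∑ i ∈ range m, sigmaE K t ω S (π i) (π (i + 1)) := by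
  classical
  obtain ⟨i, him, hiΛ⟩ := hπ
  have hfirst : ∃ i, π i ∈ Λ := ⟨i, hiΛ⟩
  let a := Nat.find hfirst
  let b := Nat.findGreatest (π · ∈ Λ) m
  have haΛ : π a ∈ Λ := Nat.find_spec hfirst
  have hbΛ : π b ∈ Λ := Nat.findGreatest_spec (P := (π · ∈ Λ)) him hiΛ
  have ham : a ≤ m := (Nat.find_min' hfirst hiΛ).trans him
  refine TtE_le_ofReal_add_sum_of_shortcut ht hω hS (Nat.le_findGreatest ham haΛ)
    (Nat.findGreatest_le m) (hΛ _ haΛ _ hbΛ) (fun j hj => Nat.find_min hfirst (mem_range.1 hj))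
    fun j hj => Nat.findGreatest_is_greatest (mem_Ico.1 hj).1 (mem_Ico.1 hj).2.le

end Resample

open Classical in
theorem frog_resampling_perturbation_general (d : ℕ)
    (K : ℕ)
    (t : ℝ) (ht : 0 < t)
    -- the underlying environment and an independent copy of it
    (ω₁ ω₂ : Zd d → ℕ) (S₁ S₂ : Zd d → ℕ → ℕ → Zd d)
    -- the tiling of ℤ^d by boxes (−t/2, t/2]^d centered at points of ℤ^d
    (cent : Zd d → Zd d)
    -- the resampled box Λ_q
    (z₀ : Zd d)
    -- a minimizing path π_t(0,x) for T_t(0,x)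
    (x : Zd d)
    (m : ℕ) (hm : 1 ≤ m) (π : ℕ → Zd d) (hπ0 : π 0 = 0) (hπm : π m = x)
    (hπopt : ∑ i ∈ Finset.range m, sigmaE K t ω₁ S₁ (π i) (π (i + 1))
      = TtE K t ω₁ S₁ 0 x) :
    TtE K t
        (fun z => if z ∈ tBox t (cent z₀) then ω₂ z else ω₁ z)
        (fun z => if z ∈ tBox t (cent z₀) then S₂ z else S₁ z) 0 x
      - TtE K t ω₁ S₁ 0 x
    ≤ if ∃ i ≤ m, π i ∈ tBox t (cent z₀) then ENNReal.ofReal (8 * K * t) else 0 := by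
  have hdiam : ∀ u ∈ tBox t (cent z₀), ∀ v ∈ tBox t (cent z₀), normInf (u - v) ≤ t :=
    fun u hu v hv => normInf_sub_le_of_mem_tBox ht.le hu hv
  subst hπm
  rw [← hπopt, ← hπ0]
  split_ifs with hR
  · exact tsub_le_iff_right.2
      (TtE_le_ofReal_add_sum_of_mem ht.le hdiam (fun _ hz => if_neg hz) (fun _ hz => if_neg hz) hR)
  · refine (tsub_eq_zero_of_le ?_).le
    exact TtE_le_sum_of_forall_notMem (fun _ hz => if_neg hz) (fun _ hz => if_neg hz) hm
      fun i hi hiΛ => hR ⟨i, (mem_range.1 hi).le, hiΛ⟩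

open Classical in
/-- **Lemma 4.4.**
Take the tiling of `ℤ^d` by copies `Λ_q` of `(−t/2, t/2]^d` centered at points of `ℤ^d`
(encoded by the map `cent` sending a site to the center of its box). Resample the data
`U_q = ((ω(z))_{z ∈ Λ_q}, (S(z,ℓ))_{z ∈ Λ_q, ℓ})` of one box `Λ = Λ_q` (replacing the
environment `(ω₁, S₁)` by an independent copy `(ω₂, S₂)` on `Λ`), and let
`Z := T_t(0,x)` and `Z'_q` be the corresponding truncated passage times. If `π_t(0,x)` is
a path realizing `Z`, and `R_q` is the event that `π_t(0,x)` meets `Λ_q`, then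
`(Z − Z'_q)_− ≤ 8Kt · 1_{R_q}`. -/
theorem frog_resampling_perturbation (d : ℕ) (hd : 2 ≤ d)
    (C₀ γ : ℝ) (hC₀ : 0 < C₀) (hγ : 0 < γ)
    (K : ℕ) (hK : (d : ℝ) * (C₀ + γ + 1) < K)
    (t : ℝ) (ht : 0 < t)
    -- the underlying environment and an independent copy of it
    (ω₁ ω₂ : Zd d → ℕ) (S₁ S₂ : Zd d → ℕ → ℕ → Zd d)
    (hS₁0 : ∀ z ℓ, S₁ z ℓ 0 = z) (hS₁nn : ∀ z ℓ k, norm1 (S₁ z ℓ (k + 1) - S₁ z ℓ k) = 1)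
    (hS₂0 : ∀ z ℓ, S₂ z ℓ 0 = z) (hS₂nn : ∀ z ℓ k, norm1 (S₂ z ℓ (k + 1) - S₂ z ℓ k) = 1)
    -- the tiling of ℤ^d by boxes (−t/2, t/2]^d centered at points of ℤ^d
    (cent : Zd d → Zd d)
    (hcent_mem : ∀ z, z ∈ tBox t (cent z))
    (hcent_eq : ∀ z w, w ∈ tBox t (cent z) → cent w = cent z)
    -- the resampled box Λ_q
    (z₀ : Zd d)
    -- a minimizing path π_t(0,x) for T_t(0,x)
    (x : Zd d) (hx : x ≠ 0)
    (m : ℕ) (hm : 1 ≤ m) (π : ℕ → Zd d) (hπ0 : π 0 = 0) (hπm : π m = x)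
    (hπopt : ∑ i ∈ Finset.range m, sigmaE K t ω₁ S₁ (π i) (π (i + 1))
      = TtE K t ω₁ S₁ 0 x) :
    TtE K t
        (fun z => if z ∈ tBox t (cent z₀) then ω₂ z else ω₁ z)
        (fun z => if z ∈ tBox t (cent z₀) then S₂ z else S₁ z) 0 x
      - TtE K t ω₁ S₁ 0 x
    ≤ if ∃ i ≤ m, π i ∈ tBox t (cent z₀) then ENNReal.ofReal (8 * K * t) else 0 :=
  frog_resampling_perturbation_general d K t ht ω₁ ω₂ S₁ S₂ cent z₀ x m hm π hπ0 hπm hπopt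

end
end

section
/- There exists a constant C ≥ 1, depending only on the dimension d, such that Σ_{q=1}^Q 1_{R_q} ≤ C · K · max(1, ‖x‖_∞ / t). -/
/-!
Each step of a path costs at least its `ℓ^∞`-length: a frog needs at least `‖x − y‖₁` steps to
get from `x` to `y`, and `K ≥ 1`. On the other hand `T_t(0,x) ≤ σ_t(0,x) ≤ 4K max(t, ‖x‖_∞)`, so
an optimal path has length at most `4K max(t, ‖x‖_∞)`. Cut by arclength into windows of length
`< t`, it splits into at most `4K max(1, ‖x‖_∞/t) + 1` pieces of diameter `< t`. Such a piece
meets at most `7^d` boxes: distinct box centers are `max(1, t/2)`-separated and lie within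
`3t/2` of any point of the piece, so their coordinates rounded down to multiples of
`max(1, t/2)` are distinct and take at most `7` values each. Hence `C = 5 · 7^d` works.
-/

open scoped ENNReal

noncomputable section

open Finset

lemma norm_le_norm1 {d : ℕ} (x : Zd d) : ‖x‖ ≤ norm1 x :=
  (pi_norm_le_iff_of_nonneg (sum_nonneg fun _ _ => abs_nonneg _)).2 fun i => by
    rw [Int.norm_eq_abs]
    exact single_le_sum (f := fun j => |(x j : ℝ)|) (fun _ _ => abs_nonneg _) (mem_univ i)

lemma normInf_eq_norm {d : ℕ} (x : Zd d) : normInf x = ‖x‖ := by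
  refine le_antisymm ?_ ((pi_norm_le_iff_of_nonneg (Nat.cast_nonneg _)).2 fun i => ?_)
  · have hsup : (univ.sup fun i => (x i).natAbs) ≤ ⌊‖x‖⌋₊ :=
      Finset.sup_le fun i _ => Nat.le_floor <| by
        rw [Nat.cast_natAbs, Int.cast_abs, ← Int.norm_eq_abs]
        exact norm_le_pi_norm x i
    exact (Nat.cast_le.2 hsup).trans (Nat.floor_le (norm_nonneg x))
  · rw [Int.norm_eq_abs, ← Int.cast_abs, ← Nat.cast_natAbs]
    exact Nat.cast_le.2 (le_sup (f := fun i => (x i).natAbs) (mem_univ i))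

lemma dist_le_of_dist_succ_le_one {α : Type*} [PseudoMetricSpace α] (f : ℕ → α)
    (hf : ∀ k, dist (f k) (f (k + 1)) ≤ 1) (n : ℕ) : dist (f 0) (f n) ≤ n :=
  (dist_le_range_sum_dist f n).trans <| by simpa using sum_le_sum fun k (_ : k ∈ range n) => hf k

section Environment

variable {d : ℕ} {ωe : Zd d → ℕ} {Se : Zd d → ℕ → ℕ → Zd d} {K : ℕ} {t : ℝ}

lemma dist_le_tauE (hS0 : ∀ z ℓ, Se z ℓ 0 = z)
    (hstep : ∀ z ℓ k, norm1 (Se z ℓ (k + 1) - Se z ℓ k) = 1) (x y : Zd d) :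
    ENNReal.ofReal (dist x y) ≤ tauE ωe Se x y := by
  refine le_sInf ?_
  rintro r ⟨k, ⟨ℓ, -, -, rfl⟩, rfl⟩
  have hwalk : ∀ k, dist (Se x ℓ k) (Se x ℓ (k + 1)) ≤ 1 := fun k => by
    rw [dist_comm, dist_eq_norm, ← hstep x ℓ k]
    exact norm_le_norm1 _
  simpa [hS0] using ENNReal.ofReal_le_ofReal (dist_le_of_dist_succ_le_one _ hwalk k)

lemma dist_le_sigmaE (hK : 1 ≤ K) (hS0 : ∀ z ℓ, Se z ℓ 0 = z)
    (hstep : ∀ z ℓ k, norm1 (Se z ℓ (k + 1) - Se z ℓ k) = 1) (x y : Zd d) :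
    ENNReal.ofReal (dist x y) ≤ sigmaE K t ωe Se x y := by
  have hK' : (1 : ℝ) ≤ K := by exact_mod_cast hK
  have hxy := dist_nonneg (x := x) (y := y)
  unfold sigmaE
  rw [normInf_eq_norm, ← dist_eq_norm]
  split_ifs with h
  · exact le_min (dist_le_tauE hS0 hstep x y) (ENNReal.ofReal_le_ofReal (by nlinarith))
  · exact ENNReal.ofReal_le_ofReal (by nlinarith)

lemma sigmaE_le (x y : Zd d) :
    sigmaE K t ωe Se x y ≤ ENNReal.ofReal (4 * K * max t (dist x y)) := by
  unfold sigmaE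
  rw [normInf_eq_norm, ← dist_eq_norm]
  split_ifs
  · exact (min_le_right _ _).trans (ENNReal.ofReal_le_ofReal (by gcongr; exact le_max_left _ _))
  · exact ENNReal.ofReal_le_ofReal (by gcongr; exact le_max_right _ _)

lemma TtE_le_sigmaE (x y : Zd d) : TtE K t ωe Se x y ≤ sigmaE K t ωe Se x y :=
  sInf_le ⟨1, le_rfl, fun i => if i = 0 then x else y, by simp, by simp, by simp⟩

lemma sum_dist_le_of_sum_sigmaE_eq_TtE (hK : 1 ≤ K) (hS0 : ∀ z ℓ, Se z ℓ 0 = z)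
    (hstep : ∀ z ℓ k, norm1 (Se z ℓ (k + 1) - Se z ℓ k) = 1) {m : ℕ} {π : ℕ → Zd d} {a b : Zd d}
    (hopt : ∑ i ∈ range m, sigmaE K t ωe Se (π i) (π (i + 1)) = TtE K t ωe Se a b) :
    ∑ i ∈ range m, dist (π i) (π (i + 1)) ≤ 4 * K * max t (dist a b) := by
  have hlen : ENNReal.ofReal (∑ i ∈ range m, dist (π i) (π (i + 1)))
      ≤ ∑ i ∈ range m, sigmaE K t ωe Se (π i) (π (i + 1)) := by
    rw [ENNReal.ofReal_sum_of_nonneg fun _ _ => dist_nonneg]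
    exact sum_le_sum fun i _ => dist_le_sigmaE hK hS0 hstep _ _
  rw [hopt] at hlen
  have hmax : 0 ≤ max t (dist a b) := le_max_of_le_right dist_nonneg
  exact (ENNReal.ofReal_le_ofReal_iff (by positivity)).1
    (hlen.trans ((TtE_le_sigmaE a b).trans (sigmaE_le a b)))

end Environment

lemma exists_window_index {α : Type*} [PseudoMetricSpace α] (f : ℕ → α) {t : ℝ} (ht : 0 < t)
    (m : ℕ) : ∃ g : ℕ → ℕ,
      (∀ i ≤ m, g i ≤ ⌊(∑ k ∈ range m, dist (f k) (f (k + 1))) / t⌋₊) ∧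
      ∀ i j, g i = g j → dist (f i) (f j) < t := by
  set s : ℕ → ℝ := fun n => ∑ k ∈ range n, dist (f k) (f (k + 1))
  have hs_nonneg : ∀ n, 0 ≤ s n := fun n => sum_nonneg fun _ _ => dist_nonneg
  refine ⟨fun i => ⌊s i / t⌋₊, fun i hi => Nat.floor_mono ?_, ?_⟩
  · gcongr
    exact sum_le_sum_of_subset_of_nonneg (range_subset_range.2 hi) fun _ _ _ => dist_nonneg
  have hwindow : ∀ i j, i ≤ j → ⌊s i / t⌋₊ = ⌊s j / t⌋₊ → dist (f i) (f j) < t := by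
    intro i j hij heq
    have hlt : s j / t < s i / t + 1 :=
      (Nat.lt_floor_add_one _).trans_le (by rw [← heq]; gcongr; exact Nat.floor_le (by positivity))
    calc dist (f i) (f j) ≤ s j - s i :=
          (dist_le_Ico_sum_dist f hij).trans_eq (sum_Ico_eq_sub _ hij)
      _ < t := by rw [div_lt_iff₀ ht, add_mul, div_mul_cancel₀ _ ht.ne', one_mul] at hlt; linarith
  intro i j heq
  rcases le_total i j with hij | hji
  · exact hwindow i j hij heq
  · exact dist_comm (f i) (f j) ▸ hwindow j i hji heq.symm

lemma card_le_of_le_dist_of_dist_le {ι : Type*} [Fintype ι] [DecidableEq ι]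
    {s : Finset (ι → ℤ)} {r : ℝ} (hr : 0 < r) (n : ℕ) (p : ι → ℤ)
    (hsep : ∀ x ∈ s, ∀ y ∈ s, x ≠ y → r ≤ dist x y) (hball : ∀ x ∈ s, dist x p ≤ n * r) :
    s.card ≤ (2 * n + 1) ^ Fintype.card ι := by
  set G : (ι → ℤ) → ι → ℤ := fun x j => ⌊(x j : ℝ) / r⌋
  have hmaps : Set.MapsTo G s (Icc (fun j => G p j - n) (fun j => G p j + n)) := by
    intro x hx
    have hcoord : ∀ j, |(x j : ℝ) / r - (p j : ℝ) / r| ≤ n := fun j => by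
      rw [← sub_div, abs_div, abs_of_pos hr, div_le_iff₀ hr, ← Int.dist_eq]
      exact (dist_le_pi_dist x p j).trans (hball x hx)
    refine mem_Icc.2 ⟨fun j => ?_, fun j => ?_⟩ <;> dsimp only [G] <;>
      obtain ⟨hlo, hhi⟩ := abs_le.1 (hcoord j)
    · rw [sub_le_iff_le_add, ← Int.floor_add_natCast]
      exact Int.floor_mono (by linarith)
    · rw [← Int.floor_add_natCast]
      exact Int.floor_mono (by linarith)
  have hinj : Set.InjOn G s := by
    intro x hx y hy hxy
    by_contra hne
    refine (hsep x hx y hy hne).not_gt ((dist_pi_lt_iff hr).2 fun j => ?_)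
    have h := Int.abs_sub_lt_one_of_floor_eq_floor (congrFun hxy j)
    rwa [← sub_div, abs_div, abs_of_pos hr, div_lt_one hr, ← Int.dist_eq] at h
  calc s.card ≤ (Icc (fun j => G p j - n) (fun j => G p j + n)).card :=
        card_le_card_of_injOn G hmaps hinj
    _ = (2 * n + 1) ^ Fintype.card ι := by
        have hcard : ∀ j, (Icc (G p j - n) (G p j + n)).card = 2 * n + 1 := fun j => by
          rw [Int.card_Icc]
          omega
        rw [Pi.card_Icc, prod_congr rfl fun j _ => hcard j, prod_const, card_univ]

section Tiling

variable {d : ℕ} {t : ℝ} {cent : Zd d → Zd d}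

lemma dist_cent_le (ht : 0 < t) (hmem : ∀ z, z ∈ tBox t (cent z)) (z : Zd d) :
    dist z (cent z) ≤ t / 2 :=
  (dist_pi_le_iff (by positivity)).2 fun i => by
    obtain ⟨h₁, h₂⟩ := hmem z i
    rw [Int.dist_eq, abs_le]
    constructor <;> linarith

lemma cent_cent (ht : 0 < t) (hcons : ∀ z w, w ∈ tBox t (cent z) → cent w = cent z)
    (z : Zd d) : cent (cent z) = cent z :=
  hcons z (cent z) fun _ => ⟨by linarith, by linarith⟩

lemma le_dist_of_cent_ne (ht : 0 < t) (hcons : ∀ z w, w ∈ tBox t (cent z) → cent w = cent z)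
    {z w : Zd d} (h : cent z ≠ cent w) : t / 2 ≤ dist (cent z) (cent w) := by
  by_contra! hlt
  have hbox : cent w ∈ tBox t (cent z) := fun i => by
    have hi := (dist_le_pi_dist (cent w) (cent z) i).trans_lt (dist_comm (cent z) (cent w) ▸ hlt)
    rw [Int.dist_eq, abs_lt] at hi
    constructor <;> linarith
  exact h ((hcons z _ hbox).symm.trans (cent_cent ht hcons w))

lemma one_le_dist_of_ne {ι : Type*} [Fintype ι] {x y : ι → ℤ} (h : x ≠ y) : 1 ≤ dist x y := by
  obtain ⟨i, hi⟩ := Function.ne_iff.1 h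
  exact (Int.pairwise_one_le_dist hi).trans (dist_le_pi_dist x y i)

lemma card_image_cent_le (ht : 0 < t) (hmem : ∀ z, z ∈ tBox t (cent z))
    (hcons : ∀ z w, w ∈ tBox t (cent z) → cent w = cent z) {s : Finset (Zd d)}
    (hs : ∀ z ∈ s, ∀ w ∈ s, dist z w ≤ t) : (s.image cent).card ≤ 7 ^ d := by
  obtain rfl | ⟨p, hp⟩ := s.eq_empty_or_nonempty
  · simp
  have hr : 0 < max 1 (t / 2) := lt_max_of_lt_left one_pos
  refine (card_le_of_le_dist_of_dist_le hr 3 p ?_ ?_).trans_eq (by simp)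
  · simp only [mem_image]
    rintro _ ⟨z, -, rfl⟩ _ ⟨w, -, rfl⟩ hne
    exact max_le (one_le_dist_of_ne hne) (le_dist_of_cent_ne ht hcons hne)
  · simp only [mem_image]
    rintro _ ⟨z, hz, rfl⟩
    calc dist (cent z) p ≤ dist (cent z) z + dist z p := dist_triangle _ _ _
      _ ≤ t / 2 + t := add_le_add (dist_comm z (cent z) ▸ dist_cent_le ht hmem z) (hs z hz p hp)
      _ ≤ _ := by push_cast; linarith [le_max_right 1 (t / 2)]

lemma card_image_cent_path_le (ht : 0 < t) (hmem : ∀ z, z ∈ tBox t (cent z))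
    (hcons : ∀ z w, w ∈ tBox t (cent z) → cent w = cent z) (π : ℕ → Zd d) (m : ℕ) :
    ((range (m + 1)).image fun i => cent (π i)).card
      ≤ (⌊(∑ i ∈ range m, dist (π i) (π (i + 1))) / t⌋₊ + 1) * 7 ^ d := by
  obtain ⟨g, hg_le, hg_window⟩ := exists_window_index π ht m
  set I := range (m + 1)
  have hcover : I.image (fun i => cent (π i))
      ⊆ (I.image g).biUnion fun v => ((I.filter (g · = v)).image π).image cent := by
    intro c hc
    obtain ⟨i, hi, rfl⟩ := mem_image.1 hc
    exact mem_biUnion.2 ⟨g i, mem_image_of_mem g hi,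
      mem_image_of_mem _ (mem_image_of_mem _ (mem_filter.2 ⟨hi, rfl⟩))⟩
  have hwindows : (I.image g).card ≤ ⌊(∑ i ∈ range m, dist (π i) (π (i + 1))) / t⌋₊ + 1 := by
    refine (card_le_card fun v hv => ?_).trans (card_range _).le
    obtain ⟨i, hi, rfl⟩ := mem_image.1 hv
    exact mem_range.2 (Nat.lt_succ_of_le (hg_le i (Nat.lt_succ_iff.1 (mem_range.1 hi))))
  calc _ ≤ _ := card_le_card hcover
    _ ≤ (I.image g).card * 7 ^ d := card_biUnion_le_card_mul _ _ _ fun v _ =>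
        card_image_cent_le ht hmem hcons <| by
          simp only [mem_image, mem_filter]
          rintro _ ⟨i, ⟨-, hi⟩, rfl⟩ _ ⟨j, ⟨-, hj⟩, rfl⟩
          exact (hg_window i j (hi.trans hj.symm)).le
    _ ≤ _ := Nat.mul_le_mul_right _ hwindows

end Tiling

theorem frog_path_visits_few_boxes_general (d : ℕ) :
    ∃ C : ℝ, 1 ≤ C ∧
      ∀ (C₀ γ : ℝ), 0 < C₀ → 0 < γ →
      ∀ K : ℕ, (d : ℝ) * (C₀ + γ + 1) < K →
      ∀ t : ℝ, 0 < t →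
      ∀ (ωe : Zd d → ℕ) (Se : Zd d → ℕ → ℕ → Zd d),
        (∀ z ℓ, Se z ℓ 0 = z) → (∀ z ℓ k, norm1 (Se z ℓ (k + 1) - Se z ℓ k) = 1) →
      ∀ cent : Zd d → Zd d,
        (∀ z, z ∈ tBox t (cent z)) → (∀ z w, w ∈ tBox t (cent z) → cent w = cent z) →
      ∀ x : Zd d, x ≠ 0 →
      ∀ (m : ℕ) (π : ℕ → Zd d), 1 ≤ m → π 0 = 0 → π m = x →
        ∑ i ∈ Finset.range m, sigmaE K t ωe Se (π i) (π (i + 1)) = TtE K t ωe Se 0 x →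
        (((Finset.range (m + 1)).image fun i => cent (π i)).card : ℝ)
          ≤ C * K * max 1 (normInf x / t) := by
  have h7 : (1 : ℝ) ≤ 7 ^ d := one_le_pow₀ (by norm_num)
  refine ⟨5 * 7 ^ d, by linarith, ?_⟩
  intro C₀ γ hC₀ hγ K hK t ht ωe Se hS0 hstep cent hmem hcons x _ m π _ _ _ hopt
  have hK1 : 1 ≤ K := Nat.cast_pos.1 ((by positivity : (0 : ℝ) ≤ d * (C₀ + γ + 1)).trans_lt hK)
  set M := max 1 (normInf x / t)
  have hlen := sum_dist_le_of_sum_sigmaE_eq_TtE hK1 hS0 hstep hopt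
  rw [dist_zero_left, ← normInf_eq_norm] at hlen
  have hfloor : (⌊(∑ i ∈ Finset.range m, dist (π i) (π (i + 1))) / t⌋₊ : ℝ) ≤ 4 * K * M := by
    refine (Nat.floor_le (by positivity)).trans ?_
    rw [div_le_iff₀ ht]
    have hMt : M * t = max t (normInf x) := by
      rw [max_mul_of_nonneg _ _ ht.le, one_mul, div_mul_cancel₀ _ ht.ne']
    rwa [mul_assoc _ M, hMt]
  have hKM : (1 : ℝ) ≤ K * M :=
    one_le_mul_of_one_le_of_one_le (by exact_mod_cast hK1) (le_max_left _ _)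
  calc _ ≤ (((⌊(∑ i ∈ Finset.range m, dist (π i) (π (i + 1))) / t⌋₊ + 1) * 7 ^ d : ℕ) : ℝ) := by
        exact_mod_cast card_image_cent_path_le ht hmem hcons π m
    _ ≤ (4 * K * M + 1) * 7 ^ d := by push_cast; gcongr
    _ ≤ 5 * 7 ^ d * K * M := by nlinarith

/-- **Lemma 4.5.**
There is a constant `C ≥ 1`, depending only on the dimension `d`, with the following
property. Tile `ℤ^d` by copies `Λ_q` of `(−t/2, t/2]^d` centered at points of `ℤ^d`
(encoded by the map `cent` sending a site to the center of its box). If `π_t(0,x)` is a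
path realizing `T_t(0,x)`, then the number of boxes of the tiling met by `π_t(0,x)`, i.e.
`∑_q 1_{R_q}`, is at most `C K max(1, ‖x‖_∞ / t)`. -/
theorem frog_path_visits_few_boxes (d : ℕ) (hd : 2 ≤ d) :
    ∃ C : ℝ, 1 ≤ C ∧
      ∀ (C₀ γ : ℝ), 0 < C₀ → 0 < γ →
      ∀ K : ℕ, (d : ℝ) * (C₀ + γ + 1) < K →
      ∀ t : ℝ, 0 < t →
      ∀ (ωe : Zd d → ℕ) (Se : Zd d → ℕ → ℕ → Zd d),
        (∀ z ℓ, Se z ℓ 0 = z) → (∀ z ℓ k, norm1 (Se z ℓ (k + 1) - Se z ℓ k) = 1) →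
      ∀ cent : Zd d → Zd d,
        (∀ z, z ∈ tBox t (cent z)) → (∀ z w, w ∈ tBox t (cent z) → cent w = cent z) →
      ∀ x : Zd d, x ≠ 0 →
      ∀ (m : ℕ) (π : ℕ → Zd d), 1 ≤ m → π 0 = 0 → π m = x →
        ∑ i ∈ Finset.range m, sigmaE K t ωe Se (π i) (π (i + 1)) = TtE K t ωe Se 0 x →
        (((Finset.range (m + 1)).image fun i => cent (π i)).card : ℝ)
          ≤ C * K * max 1 (normInf x / t) :=
  frog_path_visits_few_boxes_general d

end
end

section
/- There exists a universal constant c ∈ (0,∞), independent of x, y and the choice of maps, such that for each x ∈ ℝ^d there exists a family (g_{1,x}, g_{2,x}, …, g_{d,x}) ∈ 𝒪(ℤ^d)^d with g_{1,x} = Id_{ℝ^d} for which the linear map L_x(y) := Σ_{i=1}^d y_i g_{i,x}(x) satisfies c‖x‖₁‖y‖₁ ≤ ‖L_x(y)‖₁ ≤ ‖x‖₁‖y‖₁ for all y ∈ ℝ^d. -/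
/-!
Let `m = |x i₀|` be the largest coordinate of `x`. Besides `g_{1,x} = Id`, take for the rows the
transpositions of `i₀` with the coordinates `t ≠ i₀`, each possibly followed by a sign flip at `t`:
the row for `t` is then `f_t ± x i₀ • ξ_t` with `f_t` independent of the sign. The determinant is
affine in each row, so the signs can be chosen one at a time without making `|det|` smaller than
for the rows `x` and `x i₀ • ξ_t`, which is `m ^ d`. All entries are bounded by `m`, so the
entries of the adjugate are bounded by `(d - 1)! m ^ (d - 1)` and Cramer's rule gives
`m ‖y‖₁ ≤ d! ‖L_x(y)‖₁`; together with `‖x‖₁ ≤ d m` this yields `c = 1 / (d · d!)`.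
The upper bound is the triangle inequality, every `g` preserving `‖·‖₁`.
-/

noncomputable section

/-- The `ℓ¹`-norm on `ℝ^d`. -/
def norm1R {d : ℕ} (x : Fin d → ℝ) : ℝ := ∑ i, |x i|

/-- An element `Ψ_{σ,ε}` of the group `𝒪(ℤ^d)` of orthogonal transformations preserving
the grid `ℤ^d`: a permutation of the coordinates combined with sign flips. -/
structure GridSym (d : ℕ) where
  perm : Equiv.Perm (Fin d)
  sign : Fin d → Bool

/-- The action of `Ψ_{σ,ε}` on `ℝ^d`: `Ψ_{σ,ε}(x) = ∑ᵢ ε(i) x_{σ(i)} ξᵢ`. -/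
def GridSym.applyR {d : ℕ} (g : GridSym d) (x : Fin d → ℝ) : Fin d → ℝ :=
  fun i => (if g.sign i then 1 else -1) * x (g.perm i)

/-- The identity element of `𝒪(ℤ^d)`. -/
def GridSym.id (d : ℕ) : GridSym d := ⟨Equiv.refl _, fun _ => true⟩

open Matrix Finset
open scoped Nat

def boolSign (b : Bool) : ℝ := if b then 1 else -1

section Norm1

variable {d : ℕ}

lemma norm1R_nonneg (x : Fin d → ℝ) : 0 ≤ norm1R x :=
  sum_nonneg fun i _ => abs_nonneg (x i)

lemma norm1R_smul (c : ℝ) (x : Fin d → ℝ) : norm1R (c • x) = |c| * norm1R x := by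
  simp [norm1R, abs_mul, mul_sum]

lemma norm1R_le_of_abs_le {x : Fin d → ℝ} {m : ℝ} (h : ∀ i, |x i| ≤ m) : norm1R x ≤ d * m := by
  simpa [norm1R] using sum_le_sum fun i (_ : i ∈ univ) => h i

lemma norm1R_vecMul_le (v : Fin d → ℝ) (A : Matrix (Fin d) (Fin d) ℝ) :
    norm1R (v ᵥ* A) ≤ ∑ j, |v j| * norm1R (A j) := by
  calc norm1R (v ᵥ* A) = ∑ i, |∑ j, v j * A j i| := rfl
    _ ≤ ∑ i, ∑ j, |v j| * |A j i| := by
      gcongr with i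
      simpa only [abs_mul] using abs_sum_le_sum_abs (fun j => v j * A j i) univ
    _ = ∑ j, |v j| * norm1R (A j) := by
      rw [sum_comm]
      simp only [norm1R, mul_sum]

end Norm1

namespace GridSym

variable {d : ℕ}

def swapFlip (a t : Fin d) (b : Bool) : GridSym d :=
  ⟨Equiv.swap a t, fun i => if i = t then b else true⟩

lemma abs_applyR (g : GridSym d) (x : Fin d → ℝ) (i : Fin d) :
    |g.applyR x i| = |x (g.perm i)| := by
  unfold applyR
  split <;> simp

lemma norm1R_applyR (g : GridSym d) (x : Fin d → ℝ) : norm1R (g.applyR x) = norm1R x := by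
  simp only [norm1R, abs_applyR]
  exact Equiv.sum_comp g.perm fun i => |x i|

lemma id_applyR (x : Fin d → ℝ) : (GridSym.id d).applyR x = x := by
  ext i
  simp [applyR, GridSym.id]

lemma swapFlip_applyR (a t : Fin d) (b : Bool) (x : Fin d → ℝ) :
    (swapFlip a t b).applyR x =
      Function.update (x ∘ Equiv.swap a t) t 0 + boolSign b • Pi.single t (x a) := by
  ext i
  by_cases hi : i = t
  · subst hi; cases b <;> simp [applyR, swapFlip, boolSign]
  · simp [applyR, swapFlip, hi]

lemma norm1R_vecMul_applyR_le (g : Fin d → GridSym d) (x y : Fin d → ℝ) :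
    norm1R (y ᵥ* Matrix.of fun j => (g j).applyR x) ≤ norm1R x * norm1R y :=
  calc norm1R (y ᵥ* Matrix.of fun j => (g j).applyR x)
      ≤ ∑ j, |y j| * norm1R ((g j).applyR x) := norm1R_vecMul_le _ _
    _ = norm1R x * norm1R y := by
      simp only [norm1R_applyR, ← sum_mul]
      exact mul_comm _ _

end GridSym

section SignChoice

variable {n : Type*} [Fintype n] [DecidableEq n]

lemma exists_abs_le_abs_add_boolSign_mul (a b : ℝ) : ∃ e : Bool, |b| ≤ |a + boolSign e * b| := by
  by_contra! h
  have h₁ := h true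
  have h₂ := h false
  simp only [boolSign, ite_true, Bool.false_eq_true, ite_false, one_mul, neg_one_mul,
    ← sub_eq_add_neg] at h₁ h₂
  have := abs_sub (a + b) (a - b)
  rw [show a + b - (a - b) = 2 * b by ring, abs_mul, abs_two] at this
  linarith

lemma exists_abs_det_le_abs_det_signed (M : Matrix n n ℝ) (f : n → n → ℝ) (S : Finset n) :
    ∃ ε : n → Bool, |M.det| ≤
      |(Matrix.of fun j => if j ∈ S then f j + boolSign (ε j) • M j else M j).det| := by
  induction S using Finset.induction_on with
  | empty => exact ⟨fun _ => true, le_rfl⟩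
  | @insert j S hj ih =>
    obtain ⟨ε, hε⟩ := ih
    set N := Matrix.of fun k => if k ∈ S then f k + boolSign (ε k) • M k else M k
    have hNj : N j = M j := if_neg hj
    obtain ⟨e, he⟩ := exists_abs_le_abs_add_boolSign_mul (N.updateRow j (f j)).det N.det
    refine ⟨Function.update ε j e, hε.trans (he.trans_eq ?_)⟩
    have hrow : (Matrix.of fun k => if k ∈ insert j S then
        f k + boolSign (Function.update ε j e k) • M k else M k) =
        N.updateRow j (f j + boolSign e • M j) := by
      ext k i
      by_cases hk : k = j
      · subst hk; simp
      · simp [N, hk]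
    rw [hrow, det_updateRow_add, det_updateRow_smul, ← hNj, updateRow_eq_self]

lemma det_updateRow_one (j : n) (x : n → ℝ) :
    ((1 : Matrix n n ℝ).updateRow j x).det = x j := by
  have hx : x = ∑ k, x k • (1 : Matrix n n ℝ) k := by
    ext i; simp [Matrix.one_apply]
  rw [hx, det_updateRow_sum, det_one]
  simp [Matrix.one_apply]

end SignChoice

lemma exists_gridSym_family_abs_det_ge {d : ℕ} (x : Fin d → ℝ) (z i₀ : Fin d) :
    ∃ g : Fin d → GridSym d, g z = GridSym.id d ∧
      |x i₀| ^ d ≤ |(Matrix.of fun j => (g j).applyR x).det| := by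
  set M := (x i₀ • (1 : Matrix (Fin d) (Fin d) ℝ)).updateRow i₀ x
  have hM : |M.det| = |x i₀| ^ d := by
    rw [det_updateRow_smul_left, det_updateRow_one, Fintype.card_fin, ← pow_succ,
      Nat.sub_add_cancel z.pos, abs_pow]
  set f : Fin d → Fin d → ℝ := fun t => Function.update (x ∘ Equiv.swap i₀ t) t 0
  obtain ⟨ε, hε⟩ := exists_abs_det_le_abs_det_signed M f {i₀}ᶜ
  set N := Matrix.of fun t =>
    if t ∈ ({i₀}ᶜ : Finset (Fin d)) then f t + boolSign (ε t) • M t else M t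
  set π := Equiv.swap z i₀
  set g : Fin d → GridSym d := fun j =>
    if j = z then GridSym.id d else GridSym.swapFlip i₀ (π j) (ε (π j))
  refine ⟨g, by simp [g], ?_⟩
  have hrows : (Matrix.of fun j => (g j).applyR x) = N.submatrix π id := by
    ext j i
    by_cases hj : j = z
    · subst hj; simp [g, N, π, M, GridSym.id_applyR]
    · have hπj : π j ≠ i₀ := by simpa [π, Equiv.swap_apply_eq_iff] using hj
      simp only [g, N, f, of_apply, submatrix_apply, id, if_neg hj, GridSym.swapFlip_applyR,
        mem_compl, mem_singleton, hπj, not_false_eq_true, if_true, M, updateRow_ne hπj]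
      simp [Matrix.one_apply, Pi.single_apply, eq_comm]
  rw [hrows, det_permute, abs_mul, abs_unit_intCast, one_mul, ← hM]
  exact hε

lemma abs_adjugate_le {n : ℕ} {A : Matrix (Fin (n + 1)) (Fin (n + 1)) ℝ} {m : ℝ}
    (hA : ∀ i j, |A i j| ≤ m) (i j : Fin (n + 1)) : |A.adjugate i j| ≤ n ! * m ^ n := by
  rw [adjugate_fin_succ_eq_det_submatrix, abs_mul, abs_pow, abs_neg, abs_one, one_pow, one_mul]
  simpa using det_le (A := A.submatrix j.succAbove i.succAbove) (abv := AbsoluteValue.abs)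
    fun k l => hA (j.succAbove k) (i.succAbove l)

lemma mul_norm1R_le_norm1R_vecMul {n : ℕ} {A : Matrix (Fin (n + 1)) (Fin (n + 1)) ℝ} {m : ℝ}
    (hA : ∀ i j, |A i j| ≤ m) (hdet : m ^ (n + 1) ≤ |A.det|) (v : Fin (n + 1) → ℝ) :
    m * norm1R v ≤ (n + 1)! * norm1R (v ᵥ* A) := by
  rcases ((abs_nonneg _).trans (hA 0 0)).eq_or_lt with rfl | hm
  · simpa using mul_nonneg (Nat.cast_nonneg (n + 1)!) (norm1R_nonneg (v ᵥ* A))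
  have hcramer : |A.det| * norm1R v ≤ m ^ n * ((n + 1)! * norm1R (v ᵥ* A)) :=
    calc |A.det| * norm1R v = norm1R (v ᵥ* A ᵥ* A.adjugate) := by
          rw [vecMul_vecMul, mul_adjugate, vecMul_smul, vecMul_one, norm1R_smul]
      _ ≤ ∑ k, |(v ᵥ* A) k| * norm1R (A.adjugate k) := norm1R_vecMul_le _ _
      _ ≤ ∑ k, |(v ᵥ* A) k| * ((n + 1 : ℕ) * (n ! * m ^ n)) := by
          gcongr with k
          exact norm1R_le_of_abs_le (abs_adjugate_le hA k)
      _ = m ^ n * ((n + 1)! * norm1R (v ᵥ* A)) := by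
          rw [← sum_mul, Nat.factorial_succ]
          push_cast
          simp only [norm1R]
          ring
  refine le_of_mul_le_mul_left ?_ (pow_pos hm n)
  calc m ^ n * (m * norm1R v) = m ^ (n + 1) * norm1R v := by ring
    _ ≤ |A.det| * norm1R v := by gcongr; exact norm1R_nonneg v
    _ ≤ _ := hcramer

/-- **Lemma 3.2 (Garet–Marchand).**
There is a universal constant `c ∈ (0,∞)` (independent of `x`, `y` and of the choice of
maps) such that for every `x ∈ ℝ^d` there are `g_{1,x}, …, g_{d,x} ∈ 𝒪(ℤ^d)` with
`g_{1,x} = Id` for which the linear map `L_x(y) := ∑ᵢ yᵢ g_{i,x}(x)` satisfies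
`c ‖x‖₁ ‖y‖₁ ≤ ‖L_x(y)‖₁ ≤ ‖x‖₁ ‖y‖₁` for all `y ∈ ℝ^d`. -/
theorem adapted_basis_exists (d : ℕ) (hd : 2 ≤ d) :
    ∃ c : ℝ, 0 < c ∧
      ∀ x : Fin d → ℝ, ∃ g : Fin d → GridSym d,
        g (⟨0, by omega⟩ : Fin d) = GridSym.id d ∧
        ∀ y : Fin d → ℝ,
          c * norm1R x * norm1R y ≤ norm1R (fun i => ∑ j, y j * (g j).applyR x i) ∧
          norm1R (fun i => ∑ j, y j * (g j).applyR x i) ≤ norm1R x * norm1R y := by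
  obtain ⟨n, rfl⟩ : ∃ n, d = n + 1 := ⟨d - 1, by omega⟩
  refine ⟨((n + 1) * (n + 1)! : ℝ)⁻¹, by positivity, fun x => ?_⟩
  obtain ⟨i₀, hi₀⟩ := Finite.exists_max fun i => |x i|
  obtain ⟨g, hg₀, hdet⟩ := exists_gridSym_family_abs_det_ge x ⟨0, by omega⟩ i₀
  have hentry : ∀ j i, |(g j).applyR x i| ≤ |x i₀| :=
    fun j i => (GridSym.abs_applyR _ _ _).trans_le (hi₀ _)
  refine ⟨g, hg₀, fun y => ⟨?_, GridSym.norm1R_vecMul_applyR_le g x y⟩⟩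
  have hy := mul_norm1R_le_norm1R_vecMul hentry hdet y
  have hx : norm1R x ≤ (n + 1) * |x i₀| := by simpa using norm1R_le_of_abs_le hi₀
  rw [mul_assoc, inv_mul_le_iff₀ (by positivity)]
  calc norm1R x * norm1R y ≤ (n + 1) * |x i₀| * norm1R y := by
        gcongr; exact norm1R_nonneg y
    _ ≤ (n + 1) * ((n + 1)! * norm1R (y ᵥ* Matrix.of fun j => (g j).applyR x)) := by
        rw [mul_assoc]; exact mul_le_mul_of_nonneg_left hy (by positivity)
    _ = _ := (mul_assoc _ _ _).symm

end
end
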